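/- Let Ω ⊆ ℝ³ be open, let μ : Ω → ℝ be measurable with 0 < μ₀ ≤ μ(x) ≤ μ₁ for almost every x ∈ Ω, and let H, H_h, H̃, j : Ω → ℝ³ be locally integrable vector fields such that both H and H̃ have weak curl j in Ω. Suppose e : ℝ³ → ℝ³ is continuously differentiable with compact support contained in Ω, μ·(H − H_h) = curl e almost everywhere in Ω, and ∫_Ω μ|H̃ − H|² dx < ∞. Then all three integrals below are finite and the Prager–Synge identity holds: ∫_Ω μ|H̃ − H_h|² dx = ∫_Ω μ|H̃ − H|² dx + ∫_Ω μ|H − H_h|² dx. -/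

import Mathlib

open MeasureTheory

/-- Partial derivative of a scalar function on ℝ³ in direction `i`. -/
noncomputable def pd3 (f : (Fin 3 → ℝ) → ℝ) (i : Fin 3) (x : Fin 3 → ℝ) : ℝ :=
  fderiv ℝ f x (Pi.single i 1)

/-- The curl of a vector field on ℝ³. -/
noncomputable def curl3 (F : (Fin 3 → ℝ) → (Fin 3 → ℝ)) (x : Fin 3 → ℝ) : Fin 3 → ℝ :=
  ![pd3 (fun y => F y 2) 1 x - pd3 (fun y => F y 1) 2 x,
    pd3 (fun y => F y 0) 2 x - pd3 (fun y => F y 2) 0 x,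
    pd3 (fun y => F y 1) 0 x - pd3 (fun y => F y 0) 1 x]

/-- Euclidean dot product on ℝ³. -/
def dot3 (a b : Fin 3 → ℝ) : ℝ := ∑ i, a i * b i

/-- `G` has weak curl `g` in the open set `Ω`: for every continuously differentiable
vector field `w` with compact support contained in `Ω`, the integrands `G ⬝ curl w` and
`g ⬝ w` are integrable on `Ω` and `∫_Ω G ⬝ curl w = ∫_Ω g ⬝ w`. -/
def HasWeakCurlOn (G g : (Fin 3 → ℝ) → (Fin 3 → ℝ)) (Ω : Set (Fin 3 → ℝ)) : Prop :=
  ∀ w : (Fin 3 → ℝ) → (Fin 3 → ℝ),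
    ContDiff ℝ 1 w → HasCompactSupport w → tsupport w ⊆ Ω →
      IntegrableOn (fun x => dot3 (G x) (curl3 w x)) Ω volume ∧
      IntegrableOn (fun x => dot3 (g x) (w x)) Ω volume ∧
      ∫ x in Ω, dot3 (G x) (curl3 w x) = ∫ x in Ω, dot3 (g x) (w x)

/-!
The cross term `∫_Ω μ (H̃ - H) ⬝ (H - H_h)` vanishes: by the representation
`μ (H - H_h) = curl e` it equals `∫_Ω (H̃ - H) ⬝ curl e`, and `H̃ - H` has weak curl `j - j = 0`.
Expanding `H̃ - H_h = (H̃ - H) + (H - H_h)` then gives the identity. Finiteness of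
`∫_Ω μ |H - H_h|²` comes from `μ |H - H_h|² = μ⁻¹ |curl e|² ≤ μ₀⁻¹ |curl e|²`, with `curl e`
continuous and compactly supported.
-/

lemma dot3_sub_left (a b c : Fin 3 → ℝ) : dot3 (a - b) c = dot3 a c - dot3 b c := by
  simp only [dot3, Pi.sub_apply, sub_mul, Finset.sum_sub_distrib]

lemma dot3_smul_right (m : ℝ) (v d : Fin 3 → ℝ) : dot3 v (m • d) = m * dot3 v d := by
  simp only [dot3, Fin.sum_univ_three, Pi.smul_apply, smul_eq_mul]
  ring

lemma mul_dot3_self_eq_inv_mul_dot3_smul {m : ℝ} (hm : m ≠ 0) (d : Fin 3 → ℝ) :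
    m * dot3 d d = m⁻¹ * dot3 (m • d) (m • d) := by
  simp only [dot3, Fin.sum_univ_three, Pi.smul_apply, smul_eq_mul]
  field_simp

lemma mul_dot3_sub_sub (m : ℝ) (u h k : Fin 3 → ℝ) :
    m * dot3 (u - k) (u - k)
      = m * dot3 (u - h) (u - h) + 2 * (m * dot3 (u - h) (h - k)) + m * dot3 (h - k) (h - k) := by
  simp only [dot3, Fin.sum_univ_three, Pi.sub_apply]
  ring

lemma continuous_dot3 : Continuous fun p : (Fin 3 → ℝ) × (Fin 3 → ℝ) => dot3 p.1 p.2 := by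
  unfold dot3
  fun_prop

lemma continuous_pd3 {f : (Fin 3 → ℝ) → ℝ} (hf : ContDiff ℝ 1 f) (i : Fin 3) :
    Continuous (pd3 f i) :=
  (hf.continuous_fderiv one_ne_zero).clm_apply continuous_const

lemma ContDiff.continuous_curl3 {F : (Fin 3 → ℝ) → (Fin 3 → ℝ)} (hF : ContDiff ℝ 1 F) :
    Continuous (curl3 F) := by
  have hpd (k i : Fin 3) : Continuous (pd3 (fun y => F y k) i) :=
    continuous_pd3 (contDiff_pi.mp hF k) i
  refine continuous_pi fun i => ?_
  fin_cases i <;> exact (hpd _ _).sub (hpd _ _)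

lemma pd3_eq_zero_of_notMem_tsupport {F : (Fin 3 → ℝ) → (Fin 3 → ℝ)} {x : Fin 3 → ℝ}
    (hx : x ∉ tsupport F) (k i : Fin 3) : pd3 (fun y => F y k) i x = 0 := by
  have hxk : x ∉ tsupport fun y => F y k :=
    fun h => hx (tsupport_comp_subset (g := fun v : Fin 3 → ℝ => v k) rfl F h)
  rw [pd3, fderiv_of_notMem_tsupport ℝ hxk, zero_apply]

lemma HasCompactSupport.curl3 {F : (Fin 3 → ℝ) → (Fin 3 → ℝ)} (hF : HasCompactSupport F) :
    HasCompactSupport (curl3 F) := by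
  refine hF.mono' fun x hx => by_contra fun hxF => hx ?_
  ext i
  fin_cases i <;> simp [_root_.curl3, pd3_eq_zero_of_notMem_tsupport hxF]

lemma integrable_dot3_curl3_self {F : (Fin 3 → ℝ) → (Fin 3 → ℝ)} (hF : ContDiff ℝ 1 F)
    (hcs : HasCompactSupport F) : Integrable fun x => dot3 (curl3 F x) (curl3 F x) :=
  (continuous_dot3.comp (hF.continuous_curl3.prodMk hF.continuous_curl3)
    ).integrable_of_hasCompactSupport (hcs.curl3.comp_left (g := fun v => dot3 v v) (by simp [dot3]))

section WeakCurl

variable {G G' g g' : (Fin 3 → ℝ) → (Fin 3 → ℝ)} {Ω : Set (Fin 3 → ℝ)}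

lemma HasWeakCurlOn.sub (hG : HasWeakCurlOn G g Ω) (hG' : HasWeakCurlOn G' g' Ω) :
    HasWeakCurlOn (G - G') (g - g') Ω := by
  intro w hw hwc hwΩ
  obtain ⟨hGi, hgi, hGeq⟩ := hG w hw hwc hwΩ
  obtain ⟨hG'i, hg'i, hG'eq⟩ := hG' w hw hwc hwΩ
  simp only [Pi.sub_apply, dot3_sub_left]
  refine ⟨hGi.sub hG'i, hgi.sub hg'i, ?_⟩
  rw [integral_sub hGi hG'i, integral_sub hgi hg'i, hGeq, hG'eq]

lemma HasWeakCurlOn.integral_dot3_curl3_eq_zero (hG : HasWeakCurlOn G 0 Ω)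
    {w : (Fin 3 → ℝ) → (Fin 3 → ℝ)} (hw : ContDiff ℝ 1 w) (hwc : HasCompactSupport w)
    (hwΩ : tsupport w ⊆ Ω) : ∫ x in Ω, dot3 (G x) (curl3 w x) = 0 := by
  rw [(hG w hw hwc hwΩ).2.2]
  simp [dot3]

end WeakCurl

section Weighted

variable {α : Type*} [MeasurableSpace α] {ν : Measure α}

lemma integrable_mul_dot3_self_of_smul_eq {m : α → ℝ} {d c : α → (Fin 3 → ℝ)} {m₀ : ℝ}
    (hm₀ : 0 < m₀) (hm : AEMeasurable m ν) (hc : Integrable (fun x => dot3 (c x) (c x)) ν)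
    (hbound : ∀ᵐ x ∂ν, m₀ ≤ m x) (hsmul : ∀ᵐ x ∂ν, m x • d x = c x) :
    Integrable (fun x => m x * dot3 (d x) (d x)) ν := by
  have hinv_bound : ∀ᵐ x ∂ν, ‖(m x)⁻¹‖ ≤ m₀⁻¹ := by
    filter_upwards [hbound] with x hx
    rw [norm_inv, Real.norm_of_nonneg (hm₀.trans_le hx).le]
    exact inv_anti₀ hm₀ hx
  refine (hc.bdd_mul hm.inv.aestronglyMeasurable hinv_bound).congr ?_
  filter_upwards [hbound, hsmul] with x hx hxc
  rw [← hxc, Pi.inv_apply, mul_dot3_self_eq_inv_mul_dot3_smul (hm₀.trans_le hx).ne']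

lemma integral_mul_dot3_sub_sub_of_integral_cross_eq_zero {m : α → ℝ} {u h k : α → (Fin 3 → ℝ)}
    (huh : Integrable (fun x => m x * dot3 (u x - h x) (u x - h x)) ν)
    (hhk : Integrable (fun x => m x * dot3 (h x - k x) (h x - k x)) ν)
    (hcross : Integrable (fun x => m x * dot3 (u x - h x) (h x - k x)) ν)
    (hcross_zero : ∫ x, m x * dot3 (u x - h x) (h x - k x) ∂ν = 0) :
    Integrable (fun x => m x * dot3 (u x - k x) (u x - k x)) ν ∧
      ∫ x, m x * dot3 (u x - k x) (u x - k x) ∂ν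
        = (∫ x, m x * dot3 (u x - h x) (u x - h x) ∂ν)
          + ∫ x, m x * dot3 (h x - k x) (h x - k x) ∂ν := by
  have hexpand := funext fun x => mul_dot3_sub_sub (m x) (u x) (h x) (k x)
  have hsum : Integrable (fun x => m x * dot3 (u x - h x) (u x - h x)
      + 2 * (m x * dot3 (u x - h x) (h x - k x))) ν := huh.add (hcross.const_mul 2)
  rw [hexpand]
  refine ⟨hsum.add hhk, ?_⟩
  rw [integral_add hsum hhk, integral_add huh (hcross.const_mul 2), integral_const_mul,
    hcross_zero, mul_zero, add_zero]

end Weighted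

theorem prager_synge_identity_general
    (Ω : Set (Fin 3 → ℝ)) (hΩ : IsOpen Ω)
    (μ : (Fin 3 → ℝ) → ℝ) (hμ : Measurable μ)
    (μ₀ μ₁ : ℝ) (hμ₀ : 0 < μ₀)
    (hbound : ∀ᵐ x ∂volume, x ∈ Ω → μ₀ ≤ μ x ∧ μ x ≤ μ₁)
    (H Hh Ht j : (Fin 3 → ℝ) → (Fin 3 → ℝ))
    (hH : HasWeakCurlOn H j Ω) (hHt : HasWeakCurlOn Ht j Ω)
    (e : (Fin 3 → ℝ) → (Fin 3 → ℝ))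
    (he : ContDiff ℝ 1 e) (hesupp : HasCompactSupport e) (heΩ : tsupport e ⊆ Ω)
    (hrep : ∀ᵐ x ∂volume, x ∈ Ω → μ x • (H x - Hh x) = curl3 e x)
    (hfin : IntegrableOn (fun x => μ x * dot3 (Ht x - H x) (Ht x - H x)) Ω volume) :
    IntegrableOn (fun x => μ x * dot3 (Ht x - Hh x) (Ht x - Hh x)) Ω volume ∧
    IntegrableOn (fun x => μ x * dot3 (H x - Hh x) (H x - Hh x)) Ω volume ∧
    ∫ x in Ω, μ x * dot3 (Ht x - Hh x) (Ht x - Hh x)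
      = (∫ x in Ω, μ x * dot3 (Ht x - H x) (Ht x - H x))
        + ∫ x in Ω, μ x * dot3 (H x - Hh x) (H x - Hh x) := by
  have hrepΩ := (ae_restrict_iff' hΩ.measurableSet).2 hrep
  have hlower : ∀ᵐ x ∂volume.restrict Ω, μ₀ ≤ μ x :=
    ((ae_restrict_iff' hΩ.measurableSet).2 hbound).mono fun _ hx => hx.1
  have hHHh : IntegrableOn (fun x => μ x * dot3 (H x - Hh x) (H x - Hh x)) Ω :=
    integrable_mul_dot3_self_of_smul_eq hμ₀ hμ.aemeasurable
      (integrable_dot3_curl3_self he hesupp).integrableOn hlower hrepΩ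
  have hcross : (fun x => μ x * dot3 (Ht x - H x) (H x - Hh x))
      =ᵐ[volume.restrict Ω] fun x => dot3 ((Ht - H) x) (curl3 e x) := by
    filter_upwards [hrepΩ] with x hx
    rw [← hx, dot3_smul_right, Pi.sub_apply]
  have hHt_sub_H : HasWeakCurlOn (Ht - H) 0 Ω := sub_self j ▸ hHt.sub hH
  obtain ⟨hcross_int, -, -⟩ := hHt_sub_H e he hesupp heΩ
  obtain ⟨hint, heq⟩ := integral_mul_dot3_sub_sub_of_integral_cross_eq_zero hfin hHHh
    (hcross_int.congr hcross.symm)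
    ((integral_congr_ae hcross).trans (hHt_sub_H.integral_dot3_curl3_eq_zero he hesupp heΩ))
  exact ⟨hint, hHHh, heq⟩

theorem prager_synge_identity
    (Ω : Set (Fin 3 → ℝ)) (hΩ : IsOpen Ω)
    (μ : (Fin 3 → ℝ) → ℝ) (hμ : Measurable μ)
    (μ₀ μ₁ : ℝ) (hμ₀ : 0 < μ₀)
    (hbound : ∀ᵐ x ∂volume, x ∈ Ω → μ₀ ≤ μ x ∧ μ x ≤ μ₁)
    (H Hh Ht j : (Fin 3 → ℝ) → (Fin 3 → ℝ))
    (hHloc : LocallyIntegrableOn H Ω volume)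
    (hHhloc : LocallyIntegrableOn Hh Ω volume)
    (hHtloc : LocallyIntegrableOn Ht Ω volume)
    (hjloc : LocallyIntegrableOn j Ω volume)
    (hH : HasWeakCurlOn H j Ω) (hHt : HasWeakCurlOn Ht j Ω)
    (e : (Fin 3 → ℝ) → (Fin 3 → ℝ))
    (he : ContDiff ℝ 1 e) (hesupp : HasCompactSupport e) (heΩ : tsupport e ⊆ Ω)
    (hrep : ∀ᵐ x ∂volume, x ∈ Ω → μ x • (H x - Hh x) = curl3 e x)
    (hfin : IntegrableOn (fun x => μ x * dot3 (Ht x - H x) (Ht x - H x)) Ω volume) :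
    IntegrableOn (fun x => μ x * dot3 (Ht x - Hh x) (Ht x - Hh x)) Ω volume ∧
    IntegrableOn (fun x => μ x * dot3 (H x - Hh x) (H x - Hh x)) Ω volume ∧
    ∫ x in Ω, μ x * dot3 (Ht x - Hh x) (Ht x - Hh x)
      = (∫ x in Ω, μ x * dot3 (Ht x - H x) (Ht x - H x))
        + ∫ x in Ω, μ x * dot3 (H x - Hh x) (H x - Hh x) :=
  prager_synge_identity_general Ω hΩ μ hμ μ₀ μ₁ hμ₀ hbound H Hh Ht j hH hHt e he hesupp heΩ hrep
    hfin
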